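/- (Lemma 'equiv', type B_n^{(1)}.) Suppose in addition that λ is B_n-dominant, i.e., λ_1 ≥ λ_2 ≥ ⋯ ≥ λ_n ≥ 0. Then the following are equivalent: (1) P_i^{(a)}(ν) ≥ 0 for every 1 ≤ a ≤ n−1 and every integer i ≥ 1, and P_i^{(n)}(ν) ≥ 0 for every i ∈ (1/2)ℤ_{>0}; (2) P_i^{(a)}(ν) ≥ 0 for every 1 ≤ a ≤ n and every i in the corresponding index set such that m_i(ν^{(a)}) > 0. -/
import Mathlib

/-!
STATEMENT 19: Lemma 'equiv', type B_n^{(1)}.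
-/

namespace OSS

/-- `Q i τ = Σ_{t ∈ τ} min(t, i)`. -/
def Q (i : ℚ) (τ : Multiset ℚ) : ℚ := (τ.map (fun t => min t i)).sum

/-- Vacancy numbers of type `B_n^{(1)}` (with `ν 0 = ∅` assumed). -/
def P (n L : ℕ) (ν : ℕ → Multiset ℚ) (a : ℕ) (i : ℚ) : ℚ :=
  if a = n then 2 * Q i (ν (n - 1)) - 4 * Q i (ν n)
  else if a = n - 1 then Q i (ν (n - 2)) - 2 * Q i (ν (n - 1)) + 2 * Q i (ν n)
  else
    Q i (ν (a - 1)) - 2 * Q i (ν a) + Q i (ν (a + 1))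
      + (L : ℚ) * min i 1 * (if a = 1 then 1 else 0)

lemma min_concave (t i s : ℚ) : min t (i+s) + min t (i-s) ≤ 2 * min t i := by
  rcases le_total t i with h | h
  · have h1 : min t (i+s) ≤ t := min_le_left _ _
    have h2 : min t (i-s) ≤ t := min_le_left _ _
    have h3 : min t i = t := min_eq_left h
    linarith
  · have h1 : min t (i+s) ≤ i+s := min_le_right _ _
    have h2 : min t (i-s) ≤ i-s := min_le_right _ _
    have h3 : min t i = i := min_eq_right h
    linarith

lemma min_linear (t i s : ℚ) (hs : 0 ≤ s) (h : t ≤ i - s ∨ i + s ≤ t) :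
    min t (i+s) + min t (i-s) = 2 * min t i := by
  rcases h with h | h
  · rw [min_eq_left (by linarith), min_eq_left (by linarith), min_eq_left (by linarith)]
    ring
  · rw [min_eq_right (by linarith), min_eq_right (by linarith), min_eq_right (by linarith)]
    ring

lemma Q_concave (τ : Multiset ℚ) (i s : ℚ) : Q (i+s) τ + Q (i-s) τ ≤ 2 * Q i τ := by
  induction τ using Multiset.induction_on with
  | empty => simp [Q]
  | cons a s' ih =>
      simp only [Q, Multiset.map_cons, Multiset.sum_cons] at *
      have := min_concave a i s
      linarith

lemma Q_linear (τ : Multiset ℚ) (i s : ℚ) (hs : 0 ≤ s)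
    (h : ∀ t ∈ τ, t ≤ i - s ∨ i + s ≤ t) : Q (i+s) τ + Q (i-s) τ = 2 * Q i τ := by
  induction τ using Multiset.induction_on with
  | empty => simp [Q]
  | cons a s' ih =>
      simp only [Q, Multiset.map_cons, Multiset.sum_cons] at *
      have h1 := min_linear a i s hs (h a (Multiset.mem_cons_self _ _))
      have h2 := ih (fun t ht => h t (Multiset.mem_cons_of_mem ht))
      linarith

lemma Q_zero (τ : Multiset ℚ) (h : ∀ t ∈ τ, 0 ≤ t) : Q 0 τ = 0 := by
  induction τ using Multiset.induction_on with
  | empty => simp [Q]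
  | cons a s' ih =>
      simp only [Q, Multiset.map_cons, Multiset.sum_cons] at *
      rw [min_eq_right (h a (Multiset.mem_cons_self _ _)),
        ih (fun t ht => h t (Multiset.mem_cons_of_mem ht))]
      ring

lemma Q_sum (τ : Multiset ℚ) (i : ℚ) (h : ∀ t ∈ τ, t ≤ i) : Q i τ = τ.sum := by
  induction τ using Multiset.induction_on with
  | empty => simp [Q]
  | cons a s' ih =>
      simp only [Q, Multiset.map_cons, Multiset.sum_cons] at *
      rw [min_eq_left (h a (Multiset.mem_cons_self _ _)),
        ih (fun t ht => h t (Multiset.mem_cons_of_mem ht))]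

lemma key (f : ℤ → ℚ) (m : ℤ → Prop)
    (h0 : f 0 = 0)
    (hconc : ∀ i : ℤ, 1 ≤ i → ¬ m i → f (i+1) + f (i-1) ≤ 2 * f i)
    (hp : ∀ i : ℤ, 1 ≤ i → m i → 0 ≤ f i)
    (N : ℤ) (_hN1 : 1 ≤ N) (hN : ∀ i : ℤ, N ≤ i → f (i+1) = f i) :
    ∀ i : ℤ, 1 ≤ i → 0 ≤ f i := by
  by_contra hcon
  push_neg at hcon
  obtain ⟨i₀, ⟨hi₀1, hi₀neg⟩, hmin⟩ :=
    Int.exists_least_of_bdd (P := fun i => 1 ≤ i ∧ f i < 0)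
      ⟨1, fun z hz => hz.1⟩ (by obtain ⟨i, hi, hfi⟩ := hcon; exact ⟨i, hi, hfi⟩)
  have hmi₀ : ¬ m i₀ := fun hm => absurd (hp i₀ hi₀1 hm) (not_le.mpr hi₀neg)
  have hprev : 0 ≤ f (i₀ - 1) := by
    rcases eq_or_lt_of_le hi₀1 with h | h
    · rw [← h]; norm_num [h0]
    · by_contra hneg
      exact absurd (hmin (i₀-1) ⟨by omega, not_le.mp hneg⟩) (by omega)
  set d : ℚ := f i₀ - f (i₀ - 1) with hd
  have hdneg : d < 0 := by simp only [hd]; linarith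
  have claim : ∀ k : ℕ, (∀ j, i₀ ≤ j → j < i₀ + k → ¬ m j) →
      f (i₀ + k) ≤ f i₀ ∧ f (i₀ + k) - f (i₀ + k - 1) ≤ d := by
    intro k
    induction k with
    | zero => intro _; simp [hd]
    | succ k ih =>
        intro hnone
        have ih' := ih (fun j hj hj' => hnone j hj (by omega))
        have hmk : ¬ m (i₀ + k) := hnone (i₀ + k) (by omega) (by push_cast; omega)
        have hc := hconc (i₀ + k) (by omega) hmk
        have e1 : (i₀ + (k+1:ℕ) : ℤ) = (i₀ + k) + 1 := by push_cast; ring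
        have e2 : (i₀ + (k+1:ℕ) : ℤ) - 1 = i₀ + k := by push_cast; ring
        rw [e1, e2] at *
        constructor <;> linarith [ih'.1, ih'.2]
  by_cases hex : ∃ j : ℤ, i₀ ≤ j ∧ m j
  · obtain ⟨j, ⟨hji, hjm⟩, hjmin⟩ :=
      Int.exists_least_of_bdd (P := fun j => i₀ ≤ j ∧ m j) ⟨i₀, fun z hz => hz.1⟩ hex
    have hji' : i₀ < j := lt_of_le_of_ne hji (fun h => hmi₀ (h ▸ hjm))
    have hclaim := claim (j - i₀).toNat (by
      intro j' hj' hj'' hmj'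
      have := hjmin j' ⟨hj', hmj'⟩
      omega)
    have hje : i₀ + ((j - i₀).toNat : ℤ) = j := by omega
    rw [hje] at hclaim
    have := hp j (by omega) hjm
    linarith [hclaim.1]
  · push_neg at hex
    set k : ℕ := (N - i₀).toNat + 1 with hk
    have hclaim := claim k (fun j hj _ => hex j hj)
    have hNk : N ≤ i₀ + k - 1 := by omega
    have := hN (i₀ + k - 1) hNk
    have e : (i₀ + (k:ℤ) - 1) + 1 = i₀ + k := by ring
    rw [e] at this
    linarith [hclaim.2]

theorem vacancy_nonneg_iff_B (n L : ℕ) (hn : 3 ≤ n) (lam : ℕ → ℤ) (ν : ℕ → Multiset ℚ)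
    (hν0 : ν 0 = 0)
    (hparts : ∀ a, 1 ≤ a → a ≤ n - 1 → ∀ t ∈ ν a, ∃ k : ℤ, 0 < k ∧ t = (k : ℚ))
    (hpartsn : ∀ t ∈ ν n, ∃ k : ℤ, 0 < k ∧ t = (k : ℚ) / 2)
    (hsize : ∀ a, 1 ≤ a → a ≤ n - 1 →
      (ν a).sum = (L : ℚ) - ∑ b ∈ Finset.Icc 1 a, (lam b : ℚ))
    (hsizen : (ν n).sum = ((L : ℚ) - ∑ b ∈ Finset.Icc 1 n, (lam b : ℚ)) / 2)
    (hdom : ∀ a, 1 ≤ a → a ≤ n - 1 → lam (a + 1) ≤ lam a)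
    (hdom' : 0 ≤ lam n)
    :
    ((∀ a, 1 ≤ a → a ≤ n - 1 → ∀ i : ℤ, 1 ≤ i → 0 ≤ P n L ν a (i : ℚ)) ∧
      (∀ k : ℤ, 1 ≤ k → 0 ≤ P n L ν n ((k : ℚ) / 2))) ↔
    ((∀ a, 1 ≤ a → a ≤ n - 1 → ∀ i : ℤ, 1 ≤ i →
        0 < (ν a).count (i : ℚ) → 0 ≤ P n L ν a (i : ℚ)) ∧
      (∀ k : ℤ, 1 ≤ k →
        0 < (ν n).count ((k : ℚ) / 2) → 0 ≤ P n L ν n ((k : ℚ) / 2))) := by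
  constructor
  · rintro ⟨h1, h1n⟩
    exact ⟨fun a ha ha' i hi _ => h1 a ha ha' i hi, fun k hk _ => h1n k hk⟩
  · rintro ⟨h1, h1n⟩
    have allpos : ∀ b, b ≤ n → ∀ t ∈ ν b, 0 < t := by
      intro b hb t ht
      rcases Nat.eq_zero_or_pos b with hb0 | hb1
      · rw [hb0, hν0] at ht; simp at ht
      · rcases eq_or_ne b n with hbn | hbn
        · subst hbn
          obtain ⟨k, hk, rfl⟩ := hpartsn t ht
          have : (0:ℚ) < k := by exact_mod_cast hk
          linarith
        · obtain ⟨k, hk, rfl⟩ := hparts b hb1 (by omega) t ht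
          exact_mod_cast hk
    set B : ℚ := ∑ b ∈ Finset.range (n+1), (ν b).sum with hBdef
    have hsum_nonneg : ∀ b, b ≤ n → (0:ℚ) ≤ (ν b).sum := fun b hb =>
      Multiset.sum_nonneg (fun x hx => (allpos b hb x hx).le)
    have allbd : ∀ b, b ≤ n → ∀ t ∈ ν b, t ≤ B := by
      intro b hb t ht
      have h1' : t ≤ (ν b).sum :=
        Multiset.single_le_sum (fun x hx => (allpos b hb x hx).le) t ht
      have h2' : (ν b).sum ≤ B :=
        Finset.single_le_sum (f := fun b => (ν b).sum)
          (fun c hc => hsum_nonneg c (Nat.lt_succ_iff.mp (Finset.mem_range.mp hc)))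
          (Finset.mem_range.mpr (by omega))
      linarith
    set N : ℤ := max 1 (⌈B⌉ + 1) with hNdef
    have hN1 : 1 ≤ N := le_max_left _ _
    have hNB : B < (N:ℚ) := by
      have h1' : ((⌈B⌉ : ℤ) + 1 : ℤ) ≤ N := le_max_right _ _
      have h2' : (((⌈B⌉:ℤ) + 1 : ℤ) : ℚ) ≤ (N:ℚ) := by exact_mod_cast h1'
      push_cast at h2'
      linarith [Int.le_ceil B]
    have hN1Q : (1:ℚ) ≤ (N:ℚ) := by exact_mod_cast hN1
    have hQ0 : ∀ b, b ≤ n → Q 0 (ν b) = 0 := fun b hb =>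
      Q_zero _ (fun t ht => (allpos b hb t ht).le)
    have hQN : ∀ b, b ≤ n → ∀ x : ℚ, (N:ℚ) ≤ x → Q x (ν b) = (ν b).sum := by
      intro b hb x hx
      exact Q_sum _ _ (fun t ht => by linarith [allbd b hb t ht])
    constructor
    · intro a ha ha'
      have han : a ≠ n := by omega
      have hgap : ∀ i : ℤ, ¬ ((i:ℚ) ∈ ν a) →
          ∀ t ∈ ν a, t ≤ (i:ℚ) - 1 ∨ (i:ℚ) + 1 ≤ t := by
        intro i hmem t ht
        obtain ⟨k, hk, rfl⟩ := hparts a ha ha' t ht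
        have hne : k ≠ i := by rintro rfl; exact hmem ht
        have : k ≤ i - 1 ∨ i + 1 ≤ k := by omega
        rcases this with h | h
        · left; exact_mod_cast h
        · right; exact_mod_cast h
      refine key (fun i : ℤ => P n L ν a (i:ℚ)) (fun i => (i:ℚ) ∈ ν a) ?_ ?_ ?_ N hN1 ?_
      · -- f 0 = 0
        simp only [Int.cast_zero]
        by_cases h : a = n - 1
        · simp only [P, if_neg han, if_pos h]
          rw [hQ0 (n-2) (by omega), hQ0 (n-1) (by omega), hQ0 n le_rfl]
          ring
        · simp only [P, if_neg han, if_neg h]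
          rw [hQ0 (a-1) (by omega), hQ0 a (by omega), hQ0 (a+1) (by omega),
            min_eq_left (by norm_num : (0:ℚ) ≤ 1)]
          ring
      · -- concavity
        intro i hi hm
        have hmid := hgap i hm
        push_cast
        by_cases h : a = n - 1
        · simp only [P, if_neg han, if_pos h]
          have c1 := Q_concave (ν (n-2)) (i:ℚ) 1
          have c2 := Q_concave (ν n) (i:ℚ) 1
          have l1 := Q_linear (ν (n-1)) (i:ℚ) 1 (by norm_num) (h ▸ hmid)
          linarith
        · simp only [P, if_neg han, if_neg h]
          have c1 := Q_concave (ν (a-1)) (i:ℚ) 1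
          have c3 := Q_concave (ν (a+1)) (i:ℚ) 1
          have l1 := Q_linear (ν a) (i:ℚ) 1 (by norm_num) hmid
          have hc : (0:ℚ) ≤ (if a = 1 then (1:ℚ) else 0) := by split <;> norm_num
          have mc : min ((i:ℚ)+1) 1 + min ((i:ℚ)-1) 1 ≤ 2 * min (i:ℚ) 1 := by
            have := min_concave 1 (i:ℚ) 1
            rwa [min_comm 1 ((i:ℚ)+1), min_comm 1 ((i:ℚ)-1), min_comm 1 (i:ℚ)] at this
          have hLc : (0:ℚ) ≤ (L:ℚ) * (if a = 1 then (1:ℚ) else 0) :=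
            mul_nonneg (by positivity) hc
          nlinarith [mul_le_mul_of_nonneg_left mc hLc]
      · -- parts
        intro i hi hm
        exact h1 a ha ha' i hi (Multiset.count_pos.mpr hm)
      · -- eventually constant
        intro i hiN
        have hx : (N:ℚ) ≤ (i:ℚ) := by exact_mod_cast hiN
        push_cast
        by_cases h : a = n - 1
        · simp only [P, if_neg han, if_pos h]
          rw [hQN (n-2) (by omega) _ (by linarith), hQN (n-1) (by omega) _ (by linarith),
            hQN n le_rfl _ (by linarith), hQN (n-2) (by omega) _ hx,
            hQN (n-1) (by omega) _ hx, hQN n le_rfl _ hx]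
        · simp only [P, if_neg han, if_neg h]
          rw [hQN (a-1) (by omega) _ (by linarith), hQN a (by omega) _ (by linarith),
            hQN (a+1) (by omega) _ (by linarith), hQN (a-1) (by omega) _ hx,
            hQN a (by omega) _ hx, hQN (a+1) (by omega) _ hx,
            min_eq_right (by linarith : (1:ℚ) ≤ (i:ℚ)+1),
            min_eq_right (by linarith : (1:ℚ) ≤ (i:ℚ))]
    · -- a = n case
      have hgapn : ∀ k : ℤ, ¬ ((k:ℚ)/2 ∈ ν n) →
          ∀ t ∈ ν n, t ≤ (k:ℚ)/2 - 1/2 ∨ (k:ℚ)/2 + 1/2 ≤ t := by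
        intro k hmem t ht
        obtain ⟨j, hj, rfl⟩ := hpartsn t ht
        have hne : j ≠ k := by rintro rfl; exact hmem ht
        have : j ≤ k - 1 ∨ k + 1 ≤ j := by omega
        rcases this with h | h
        · left
          have : (j:ℚ) ≤ (k:ℚ) - 1 := by exact_mod_cast h
          linarith
        · right
          have : (k:ℚ) + 1 ≤ (j:ℚ) := by exact_mod_cast h
          linarith
      have hPn : ∀ x : ℚ, P n L ν n x = 2 * Q x (ν (n-1)) - 4 * Q x (ν n) := by
        intro x; simp [P]
      refine key (fun k : ℤ => P n L ν n ((k:ℚ)/2)) (fun k => (k:ℚ)/2 ∈ ν n) ?_ ?_ ?_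
        (2*N) (by omega) ?_
      · show P n L ν n (((0:ℤ):ℚ)/2) = 0
        have e0 : ((0:ℤ):ℚ)/2 = 0 := by norm_num
        rw [e0, hPn, hQ0 (n-1) (by omega), hQ0 n le_rfl]
        ring
      · intro k hk hm
        show P n L ν n ((((k+1):ℤ):ℚ)/2) + P n L ν n ((((k-1):ℤ):ℚ)/2)
          ≤ 2 * P n L ν n ((k:ℚ)/2)
        have e1 : (((k+1:ℤ)):ℚ)/2 = (k:ℚ)/2 + 1/2 := by push_cast; ring
        have e2 : (((k-1:ℤ)):ℚ)/2 = (k:ℚ)/2 - 1/2 := by push_cast; ring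
        rw [e1, e2, hPn, hPn, hPn]
        have c1 := Q_concave (ν (n-1)) ((k:ℚ)/2) (1/2)
        have l1 := Q_linear (ν n) ((k:ℚ)/2) (1/2) (by norm_num) (hgapn k hm)
        linarith
      · intro k hk hm
        exact h1n k hk (Multiset.count_pos.mpr hm)
      · intro k hk2
        show P n L ν n ((((k+1):ℤ):ℚ)/2) = P n L ν n ((k:ℚ)/2)
        have hx : (N:ℚ) ≤ (k:ℚ)/2 := by
          have : ((2*N : ℤ):ℚ) ≤ (k:ℚ) := by exact_mod_cast hk2
          push_cast at this
          linarith
        have e1 : (((k+1:ℤ)):ℚ)/2 = (k:ℚ)/2 + 1/2 := by push_cast; ring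
        rw [e1, hPn, hPn, hQN (n-1) (by omega) _ (by linarith), hQN n le_rfl _ (by linarith),
          hQN (n-1) (by omega) _ hx, hQN n le_rfl _ hx]

end OSS
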